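/- With h_ε as above and c ∈ A₊ a contraction, the hereditary subalgebra generated by (c−2ε)₊ equals the closure of h_ε(c)·A·h_ε(c). -/

import Mathlib

/-! If `G` is bounded away from `0` wherever `F > δ`, then on that region
`(F - δ)₊ = G · ((F - δ)₊ / G²) · G`, and `(F - δ)₊` is uniformly `δ`-close to `F ≥ 0`.
Applying this through the functional calculus puts `F(c)` in the closure of `G(c) A G(c)`,
and hence the closure of `F(c) A F(c)` inside it. Both `(t - 2ε)₊` and `h_ε` vanish exactly
on `t ≤ 2ε`, so each is bounded away from `0` where the other exceeds `δ`. -/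

/-- The function `h_ε : (0,1] → [0,1]` which is `0` on `(0,2ε]`, `1` on `[3ε,1]` and
linear on `[2ε,3ε]`, extended by the same formula to all of `ℝ`. -/
noncomputable def hFun (ε : ℝ) (t : ℝ) : ℝ := min 1 (max ((t - 2 * ε) / ε) 0)

/-- The positive part `(a − δ)₊` of an element, via functional calculus. -/
noncomputable def cutDown {A : Type*} [NonUnitalCStarAlgebra A] [PartialOrder A]
    [StarOrderedRing A] (a : A) (δ : ℝ) : A :=
  cfcₙ (fun t : ℝ => max (t - δ) 0) a

section Hereditary

variable {A : Type*} [Semigroup A] [TopologicalSpace A] [ContinuousMul A]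

def hereditaryClosure (b : A) : Set A := closure {y : A | ∃ z : A, y = b * z * b}

theorem hereditaryClosure_subset_of_mem {a b : A} (h : a ∈ hereditaryClosure b) :
    hereditaryClosure a ⊆ hereditaryClosure b := by
  refine closure_minimal ?_ isClosed_closure
  rintro _ ⟨z, rfl⟩
  refine map_mem_closure (f := fun x => x * z * x) (by fun_prop) h ?_
  rintro _ ⟨w, rfl⟩
  exact ⟨w * b * z * b * w, by simp only [mul_assoc]⟩

end Hereditary

theorem exists_sandwich_approx {F G : ℝ → ℝ} (hF : Continuous F) (hF_nonneg : ∀ t, 0 ≤ F t)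
    (hF0 : F 0 = 0) (hG : Continuous G)
    (hsep : ∀ δ > 0, ∃ η > 0, ∀ t, δ < F t → η ≤ |G t|) {r : ℝ} (hr : 0 < r) :
    ∃ K : ℝ → ℝ, Continuous K ∧ K 0 = 0 ∧ ∀ t, |F t - G t * K t * G t| < r := by
  obtain ⟨η, hη, hGη⟩ := hsep (r / 2) (by positivity)
  have hden : ∀ t, 0 < max (G t ^ 2) (η ^ 2) := fun t =>
    (pow_pos hη 2).trans_le (le_max_right _ _)
  refine ⟨fun t => max (F t - r / 2) 0 / max (G t ^ 2) (η ^ 2),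
    (by fun_prop : Continuous _).div (by fun_prop) fun t => (hden t).ne',
    by simp [hF0, div_nonneg hr.le zero_le_two], ?_⟩
  intro t
  have hsandwich : G t * (max (F t - r / 2) 0 / max (G t ^ 2) (η ^ 2)) * G t =
      max (F t - r / 2) 0 := by
    rcases le_or_gt (F t) (r / 2) with hle | hlt
    · simp [max_eq_right (sub_nonpos.mpr hle)]
    · have hη_le : η ^ 2 ≤ G t ^ 2 := by
        simpa only [sq_abs] using pow_le_pow_left₀ hη.le (hGη t hlt) 2
      have hGt : G t ≠ 0 := fun h0 => by simp [h0] at hη_le; linarith [pow_pos hη 2]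
      rw [max_eq_left hη_le]
      field_simp
  rw [hsandwich, abs_lt]
  constructor <;> cases max_cases (F t - r / 2) 0 <;> linarith [hF_nonneg t]

theorem cfcₙ_mem_hereditaryClosure {A : Type*} [NonUnitalCStarAlgebra A] (c : A)
    {F G : ℝ → ℝ} (hF : Continuous F) (hF0 : F 0 = 0) (hG : Continuous G) (hG0 : G 0 = 0)
    (happrox : ∀ r > 0, ∃ K : ℝ → ℝ, Continuous K ∧ K 0 = 0 ∧
      ∀ t, |F t - G t * K t * G t| < r) :
    cfcₙ F c ∈ hereditaryClosure (cfcₙ G c) := by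
  refine Metric.mem_closure_iff.mpr fun r hr => ?_
  obtain ⟨K, hK, hK0, hnear⟩ := happrox r hr
  refine ⟨_, ⟨cfcₙ K c, rfl⟩, ?_⟩
  rw [← cfcₙ_mul G K c, ← cfcₙ_mul (fun t => G t * K t) G c (by fun_prop) (by simp [hG0]),
    dist_eq_norm, ← cfcₙ_sub F _ c (hf0 := hF0) (hg0 := by simp [hG0])]
  exact norm_cfcₙ_lt fun t _ => hnear t

theorem hereditaryClosure_cfcₙ_subset {A : Type*} [NonUnitalCStarAlgebra A] (c : A)
    {F G : ℝ → ℝ} (hF : Continuous F) (hF_nonneg : ∀ t, 0 ≤ F t) (hF0 : F 0 = 0)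
    (hG : Continuous G) (hG0 : G 0 = 0)
    (hsep : ∀ δ > 0, ∃ η > 0, ∀ t, δ < F t → η ≤ |G t|) :
    hereditaryClosure (cfcₙ F c) ⊆ hereditaryClosure (cfcₙ G c) :=
  hereditaryClosure_subset_of_mem <| cfcₙ_mem_hereditaryClosure c hF hF0 hG hG0 fun _ hr =>
    exists_sandwich_approx hF hF_nonneg hF0 hG hsep hr

section HFun

variable {ε : ℝ}

theorem continuous_hFun : Continuous (hFun ε) := by
  unfold hFun; fun_prop

theorem hFun_nonneg (t : ℝ) : 0 ≤ hFun ε t :=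
  le_min zero_le_one (le_max_right _ _)

theorem hFun_zero (hε : 0 < ε) : hFun ε 0 = 0 := by
  have : (0 - 2 * ε) / ε ≤ 0 := div_nonpos_of_nonpos_of_nonneg (by linarith) hε.le
  rw [hFun, max_eq_right this, min_eq_right zero_le_one]

theorem min_one_div_le_hFun (hε : 0 < ε) {δ t : ℝ} (h : δ ≤ t - 2 * ε) :
    min 1 (δ / ε) ≤ hFun ε t :=
  min_le_min_left 1 <| (div_le_div_of_nonneg_right h hε.le).trans (le_max_left _ _)

theorem mul_lt_sub_of_lt_hFun (hε : 0 < ε) {δ t : ℝ} (hδ : 0 ≤ δ) (h : δ < hFun ε t) :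
    ε * δ < t - 2 * ε := by
  have h' : δ < max ((t - 2 * ε) / ε) 0 := h.trans_le (min_le_right _ _)
  have : δ < (t - 2 * ε) / ε := by
    rcases lt_max_iff.mp h' with h | h
    · exact h
    · linarith
  rwa [lt_div_iff₀ hε, mul_comm] at this

end HFun

theorem hereditary_cutDown_eq_hereditary_hFun_general {A : Type*} [NonUnitalCStarAlgebra A]
    [PartialOrder A] [StarOrderedRing A] (c : A)
    (ε : ℝ) (hε : 0 < ε) :
    closure {y : A | ∃ z : A, y = cutDown c (2 * ε) * z * cutDown c (2 * ε)} =
      closure {y : A | ∃ z : A, y = cfcₙ (hFun ε) c * z * cfcₙ (hFun ε) c} := by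
  have hcut_cont : Continuous fun t : ℝ => max (t - 2 * ε) 0 := by fun_prop
  have hcut_zero : max (0 - 2 * ε) 0 = 0 := max_eq_right (by linarith)
  refine subset_antisymm (hereditaryClosure_cfcₙ_subset c hcut_cont (fun _ => le_max_right _ _)
    hcut_zero continuous_hFun (hFun_zero hε) fun δ hδ => ⟨min 1 (δ / ε), by positivity, ?_⟩)
    (hereditaryClosure_cfcₙ_subset c continuous_hFun hFun_nonneg (hFun_zero hε) hcut_cont
      hcut_zero fun δ hδ => ⟨ε * δ, by positivity, ?_⟩)
  · intro t ht
    have : δ ≤ t - 2 * ε := by cases max_cases (t - 2 * ε) 0 <;> linarith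
    exact (min_one_div_le_hFun hε this).trans (le_abs_self _)
  · intro t ht
    have hlt := mul_lt_sub_of_lt_hFun hε hδ.le ht
    have hpos : 0 < ε * δ := by positivity
    rw [max_eq_left (by linarith), abs_of_pos (by linarith)]
    exact hlt.le

/-- **Hereditary subalgebras agree:** for a positive contraction `c` and `ε > 0`, the
hereditary subalgebra generated by `(c − 2ε)₊` equals the closure of `h_ε(c)·A·h_ε(c)`. -/
theorem hereditary_cutDown_eq_hereditary_hFun {A : Type*} [NonUnitalCStarAlgebra A]
    [PartialOrder A] [StarOrderedRing A] (c : A) (hc : 0 ≤ c) (hc1 : ‖c‖ ≤ 1)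
    (ε : ℝ) (hε : 0 < ε) :
    closure {y : A | ∃ z : A, y = cutDown c (2 * ε) * z * cutDown c (2 * ε)} =
      closure {y : A | ∃ z : A, y = cfcₙ (hFun ε) c * z * cfcₙ (hFun ε) c} :=
  hereditary_cutDown_eq_hereditary_hFun_general c ε hε
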